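/- Explicit formula for the Weyl matrix: let q : [0,2π] → ℝ be continuous, λ ∈ ℝ, and let φ, θ ∈ C²([0,2π]) satisfy −φ'' + qφ = λφ and −θ'' + qθ = λθ with φ(0) = 0, φ'(0) = 1, θ(0) = 1, θ'(0) = 0, and assume F(2π) ≠ 2 where F(x) := φ'(x) + θ(x). Let M₀ be the 2×2 matrix with rows (−φ(2π), 1−θ(2π)) and (1−φ'(2π), −θ'(2π)), and let M₁ be ½ times the 2×2 matrix with rows (1+φ'(2π), θ'(2π)) and (−φ(2π), −(1+θ(2π))). Then M₀ is invertible and M₁ · M₀⁻¹ = (1/(2(F(2π)−2))) times the symmetric matrix with rows (−2θ'(2π), θ(2π)−φ'(2π)) and (θ(2π)−φ'(2π), 2φ(2π)). -/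

import Mathlib

open Real Set

/-- One-sided/interior derivative on the interval `[0, 2π]`. -/
noncomputable def D (f : ℝ → ℝ) (x : ℝ) : ℝ :=
  derivWithin f (Set.Icc 0 (2 * Real.pi)) x

/-- Second derivative on the interval `[0, 2π]`. -/
noncomputable def D2 (f : ℝ → ℝ) (x : ℝ) : ℝ :=
  derivWithin (D f) (Set.Icc 0 (2 * Real.pi)) x

/-- **Explicit formula for the Weyl matrix**: with `M₀, M₁` the matrices representing
the boundary operators `Γ₀, Γ₁` on the solution space, and `F(2π) ≠ 2` for the
Lyapunov function `F = φ' + θ`, the matrix `M₀` is invertible and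
`M₁M₀⁻¹ = 1/(2(F(2π)−2)) · [[−2θ'(2π), θ(2π)−φ'(2π)], [θ(2π)−φ'(2π), 2φ(2π)]]`. -/
theorem weyl_matrix_formula
    (q : ℝ → ℝ) (hq : ContinuousOn q (Set.Icc 0 (2 * Real.pi)))
    (lam : ℝ) (phi theta : ℝ → ℝ)
    (hphi : ContDiffOn ℝ 2 phi (Set.Icc 0 (2 * Real.pi)))
    (htheta : ContDiffOn ℝ 2 theta (Set.Icc 0 (2 * Real.pi)))
    (hphiode : ∀ x ∈ Set.Icc (0:ℝ) (2 * Real.pi),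
      -(D2 phi x) + q x * phi x = lam * phi x)
    (hthetaode : ∀ x ∈ Set.Icc (0:ℝ) (2 * Real.pi),
      -(D2 theta x) + q x * theta x = lam * theta x)
    (hphi0 : phi 0 = 0) (hphi'0 : D phi 0 = 1)
    (htheta0 : theta 0 = 1) (htheta'0 : D theta 0 = 0)
    (hF : D phi (2 * Real.pi) + theta (2 * Real.pi) ≠ 2) :
    IsUnit (!![-(phi (2 * Real.pi)), 1 - theta (2 * Real.pi);
               1 - D phi (2 * Real.pi), -(D theta (2 * Real.pi))]) ∧
    ((1 / 2 : ℝ) • !![1 + D phi (2 * Real.pi), D theta (2 * Real.pi);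
                      -(phi (2 * Real.pi)), -(1 + theta (2 * Real.pi))])
        * (!![-(phi (2 * Real.pi)), 1 - theta (2 * Real.pi);
              1 - D phi (2 * Real.pi), -(D theta (2 * Real.pi))])⁻¹
      = (1 / (2 * ((D phi (2 * Real.pi) + theta (2 * Real.pi)) - 2)))
          • !![-2 * D theta (2 * Real.pi),
                theta (2 * Real.pi) - D phi (2 * Real.pi);
               theta (2 * Real.pi) - D phi (2 * Real.pi),
                2 * phi (2 * Real.pi)] := by
  have hpi : (0:ℝ) < 2 * Real.pi := by positivity
  set I := Set.Icc (0:ℝ) (2 * Real.pi) with hI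
  have hU : UniqueDiffOn ℝ I := uniqueDiffOn_Icc hpi
  -- Wronskian
  have hdp : DifferentiableOn ℝ phi I := hphi.differentiableOn (by norm_num)
  have hdt : DifferentiableOn ℝ theta I := htheta.differentiableOn (by norm_num)
  have hDp : DifferentiableOn ℝ (D phi) I :=
    (hphi.derivWithin (m := 1) hU (by norm_num)).differentiableOn one_ne_zero
  have hDt : DifferentiableOn ℝ (D theta) I :=
    (htheta.derivWithin (m := 1) hU (by norm_num)).differentiableOn one_ne_zero
  set g : ℝ → ℝ := fun x => phi x * D theta x - D phi x * theta x with hg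
  have hgd : DifferentiableOn ℝ g I := (hdp.mul hDt).sub (hDp.mul hdt)
  have hgz : ∀ x ∈ I, derivWithin g I x = 0 := by
    intro x hx
    have h1 : HasDerivWithinAt phi (D phi x) I x := (hdp x hx).hasDerivWithinAt
    have h2 : HasDerivWithinAt theta (D theta x) I x := (hdt x hx).hasDerivWithinAt
    have h3 : HasDerivWithinAt (D phi) (D2 phi x) I x := (hDp x hx).hasDerivWithinAt
    have h4 : HasDerivWithinAt (D theta) (D2 theta x) I x := (hDt x hx).hasDerivWithinAt
    have h5 : HasDerivWithinAt g
        (D phi x * D theta x + phi x * D2 theta x -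
         (D2 phi x * theta x + D phi x * D theta x)) I x :=
      (h1.mul h4).sub (h3.mul h2)
    have e1 : D2 phi x = (q x - lam) * phi x := by have := hphiode x hx; ring_nf at this ⊢; linarith
    have e2 : D2 theta x = (q x - lam) * theta x := by have := hthetaode x hx; ring_nf at this ⊢; linarith
    have : D phi x * D theta x + phi x * D2 theta x -
         (D2 phi x * theta x + D phi x * D theta x) = 0 := by rw [e1, e2]; ring
    rw [this] at h5
    exact h5.derivWithin (hU x hx)
  have hmem : (2 * Real.pi) ∈ I := by constructor <;> [exact le_of_lt hpi; rfl]
  have hgconst := constant_of_derivWithin_zero hgd (fun x hx => hgz x (Set.mem_Icc_of_Ico hx)) (2 * Real.pi) hmem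
  have hW : phi (2 * Real.pi) * D theta (2 * Real.pi) -
      D phi (2 * Real.pi) * theta (2 * Real.pi) = -1 := by
    have : g 0 = -1 := by simp [hg, hphi0, hphi'0, htheta0, htheta'0]
    rw [hg] at hgconst; simp only at hgconst; rw [hgconst]; simpa [hg] using this
  -- algebra
  set a := phi (2 * Real.pi)
  set b := theta (2 * Real.pi)
  set c := D phi (2 * Real.pi)
  set d := D theta (2 * Real.pi)
  have hdet : Matrix.det !![-a, 1 - b; 1 - c, -d] = b + c - 2 := by
    rw [Matrix.det_fin_two_of]; nlinarith [hW]
  have hdet0 : b + c - 2 ≠ 0 := fun h => hF (by linarith [h])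
  have hunit : IsUnit (!![-a, 1 - b; 1 - c, -d]) := by
    rw [Matrix.isUnit_iff_isUnit_det, hdet]; exact (isUnit_iff_ne_zero.2 hdet0)
  refine ⟨hunit, ?_⟩
  have hinv : (!![-a, 1 - b; 1 - c, -d])⁻¹ =
      (b + c - 2)⁻¹ • !![-d, -(1 - b); -(1 - c), -a] := by
    apply Matrix.inv_eq_right_inv
    rw [Matrix.mul_smul, Matrix.mul_fin_two]
    ext i j
    fin_cases i <;> fin_cases j <;>
      simp only [Matrix.smul_apply, Matrix.cons_val', Matrix.cons_val_zero, Matrix.cons_val_one,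
        Matrix.head_cons, Matrix.head_fin_const, Matrix.empty_val', Matrix.cons_val_fin_one,
        Matrix.of_apply, Matrix.one_apply, smul_eq_mul, Fin.isValue, Fin.zero_eta, Fin.mk_one,
        zero_ne_one, one_ne_zero, if_true, if_false] <;>
      field_simp <;> nlinarith [hW]
  have h2 : (2:ℝ) * (c + b - 2) ≠ 0 := by
    intro h; apply hdet0; nlinarith
  rw [hinv, Matrix.smul_mul, Matrix.mul_smul, smul_smul, Matrix.mul_fin_two]
  ext i j
  fin_cases i <;> fin_cases j <;>
    simp only [Matrix.smul_apply, Matrix.cons_val', Matrix.cons_val_zero, Matrix.cons_val_one,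
      Matrix.head_cons, Matrix.head_fin_const, Matrix.empty_val', Matrix.cons_val_fin_one,
      Matrix.of_apply, smul_eq_mul, Fin.isValue, Fin.zero_eta, Fin.mk_one] <;>
    field_simp
  · linarith
  · linear_combination (-(c+b-2)) * hW
  · linear_combination (c+b-2) * hW
  · linarith
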